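/- A sequence (A_m)_{m∈ℕ} ⊆ B(X) admits a strong nonuniform polynomial dichotomy if and only if it admits a polynomial dichotomy with respect to some sequence of norms ‖·‖_m satisfying both ‖x‖ ≤ ‖x‖_m ≤ C m^ε ‖x‖ (for some C > 0, ε ≥ 0) and the uniform polynomial growth bound ‖A(m,n)x‖_m ≤ M(m/n)^a ‖x‖_n for all m ≥ n (for some M, a > 0). -/

import Mathlib

open scoped BigOperators

variable {X : Type*} [NormedAddCommGroup X] [NormedSpace ℝ X]

/-- The cocycle generated by a sequence of bounded operators:
`coc A n m = 𝓐(m,n) = A_{m-1} ⋯ A_n` for `m > n`, and `= Id` for `m ≤ n`. -/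
def coc (A : ℕ → X →L[ℝ] X) (n : ℕ) : ℕ → X →L[ℝ] X
  | 0 => 1
  | m + 1 => if n ≤ m then (A m).comp (coc A n m) else 1

/-- The formal difference operator: `(T x)_1 = 0` and
`(T x)_{m+1} = (m+1)(x_{m+1} - A_m x_m)` for `m ≥ 1`. -/
noncomputable def TOp (A : ℕ → X →L[ℝ] X) (x : ℕ → X) : ℕ → X :=
  fun m => if m ≤ 1 then 0 else (m : ℝ) • (x m - A (m - 1) (x (m - 1)))

/-- `N` is a family (indexed by `m ≥ 1`) of norms on `X`, each equivalent to `‖·‖`. -/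
def NormFamily (N : ℕ → X → ℝ) : Prop :=
  ∀ m, 1 ≤ m →
    (∀ x y : X, N m (x + y) ≤ N m x + N m y) ∧
    (∀ (c : ℝ) (x : X), N m (c • x) = |c| * N m x) ∧
    (∃ c C : ℝ, 0 < c ∧ ∀ x : X, c * ‖x‖ ≤ N m x ∧ N m x ≤ C * ‖x‖)

/-- Membership in `Y`: `sup_{m ≥ 1} ‖x_m‖_m < ∞`. -/
def MemY (N : ℕ → X → ℝ) (x : ℕ → X) : Prop :=
  ∃ S : ℝ, ∀ m, 1 ≤ m → N m (x m) ≤ S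

/-- Membership in `Y₀ = Y_{{0}}`: bounded and `x_1 = 0`. -/
def MemY0 (N : ℕ → X → ℝ) (x : ℕ → X) : Prop := x 1 = 0 ∧ MemY N x

/-- Membership in `Y_Z`: bounded and `x_1 ∈ Z`. -/
def MemYZ (N : ℕ → X → ℝ) (Z : Set X) (x : ℕ → X) : Prop := x 1 ∈ Z ∧ MemY N x

/-- Membership in the domain `𝒟(T_Z)`: `x ∈ Y_Z` and
`sup_{m ≥ 1} (m+1)‖x_{m+1} - A_m x_m‖_{m+1} < ∞`. -/
def MemD (A : ℕ → X →L[ℝ] X) (N : ℕ → X → ℝ) (Z : Set X) (x : ℕ → X) : Prop :=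
  MemYZ N Z x ∧ MemY N (TOp A x)

/-- Polynomial dichotomy (with given projections and constants) with respect to the
sequence of norms `N`.  The bound along the unstable direction is stated in the
equivalent "forward" form: `‖u‖_m ≤ D (m/n)^λ ‖𝓐(n,m)u‖_n` for `u ∈ Ker P_m`, `m ≤ n`. -/
def PolyDichWith (A : ℕ → X →L[ℝ] X) (N : ℕ → X → ℝ) (P : ℕ → X →L[ℝ] X)
    (D lam : ℝ) : Prop :=
  (∀ m, 1 ≤ m → (P m).comp (P m) = P m) ∧
  (∀ m, 1 ≤ m → (A m).comp (P m) = (P (m + 1)).comp (A m)) ∧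
  (∀ m, 1 ≤ m → ∀ y, P (m + 1) y = 0 → ∃! x, P m x = 0 ∧ A m x = y) ∧
  (∀ m n, 1 ≤ n → n ≤ m → ∀ x : X,
      N m (coc A n m (P n x)) ≤ D * (((m : ℝ) / (n : ℝ)) ^ (-lam)) * N n x) ∧
  (∀ m n, 1 ≤ m → m ≤ n → ∀ u : X, P m u = 0 →
      N m u ≤ D * (((m : ℝ) / (n : ℝ)) ^ lam) * N n (coc A m n u))

/-- `(A_m)` admits a polynomial dichotomy with respect to the sequence of norms `N`. -/
def PolyDich (A : ℕ → X →L[ℝ] X) (N : ℕ → X → ℝ) : Prop :=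
  ∃ (P : ℕ → X →L[ℝ] X) (D lam : ℝ), 0 < D ∧ 0 < lam ∧ PolyDichWith A N P D lam

/-- Nonuniform polynomial dichotomy with given projections and constants `D, λ, ε`.
The unstable bound `‖𝓐(m,n)Q_n‖ ≤ D(n/m)^{-λ}n^ε` (`m ≤ n`) is stated in the equivalent
form: if `u ∈ Ker P_m` and `𝓐(n,m)u = Q_n x`, then `‖u‖ ≤ D(m/n)^λ n^ε ‖x‖`. -/
def NUPDWith (A : ℕ → X →L[ℝ] X) (P : ℕ → X →L[ℝ] X) (D lam ε : ℝ) : Prop :=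
  (∀ m, 1 ≤ m → (P m).comp (P m) = P m) ∧
  (∀ m, 1 ≤ m → (A m).comp (P m) = (P (m + 1)).comp (A m)) ∧
  (∀ m, 1 ≤ m → ∀ y, P (m + 1) y = 0 → ∃! x, P m x = 0 ∧ A m x = y) ∧
  (∀ m n, 1 ≤ n → n ≤ m → ∀ x : X,
      ‖coc A n m (P n x)‖ ≤ D * (((m : ℝ) / (n : ℝ)) ^ (-lam)) * ((n : ℝ) ^ ε) * ‖x‖) ∧
  (∀ m n, 1 ≤ m → m ≤ n → ∀ u x : X, P m u = 0 → coc A m n u = x - P n x →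
      ‖u‖ ≤ D * (((m : ℝ) / (n : ℝ)) ^ lam) * ((n : ℝ) ^ ε) * ‖x‖)

/-- `(A_m)` admits a nonuniform polynomial dichotomy. -/
def NUPD (A : ℕ → X →L[ℝ] X) : Prop :=
  ∃ (P : ℕ → X →L[ℝ] X) (D lam ε : ℝ),
    0 < D ∧ 0 < lam ∧ 0 ≤ ε ∧ NUPDWith A P D lam ε

/-- `(A_m)` admits a strong nonuniform polynomial dichotomy: a nonuniform polynomial
dichotomy together with the growth bound `‖𝓐(m,n)‖ ≤ K(m/n)^b n^ε` for `m ≥ n`,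
with the same `ε`. -/
def SNUPD (A : ℕ → X →L[ℝ] X) : Prop :=
  ∃ (P : ℕ → X →L[ℝ] X) (D lam ε K b : ℝ),
    0 < D ∧ 0 < lam ∧ 0 ≤ ε ∧ 0 < K ∧ 0 < b ∧ NUPDWith A P D lam ε ∧
    ∀ m n, 1 ≤ n → n ≤ m → ∀ x : X,
      ‖coc A n m x‖ ≤ K * (((m : ℝ) / (n : ℝ)) ^ b) * ((n : ℝ) ^ ε) * ‖x‖

/-- A family of norms `‖·‖_m` with `‖x‖ ≤ ‖x‖_m ≤ C m^ε ‖x‖`. -/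
def AdaptedNorms (N : ℕ → X → ℝ) (C ε : ℝ) : Prop :=
  ∀ m, 1 ≤ m →
    (∀ x y : X, N m (x + y) ≤ N m x + N m y) ∧
    (∀ (c : ℝ) (x : X), N m (c • x) = |c| * N m x) ∧
    ∀ x : X, ‖x‖ ≤ N m x ∧ N m x ≤ C * ((m : ℝ) ^ ε) * ‖x‖

/-- The uniform polynomial growth bound `‖𝓐(m,n)x‖_m ≤ M (m/n)^a ‖x‖_n` for `m ≥ n`. -/
def Grow (A : ℕ → X →L[ℝ] X) (N : ℕ → X → ℝ) (M a : ℝ) : Prop :=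
  ∀ m n, 1 ≤ n → n ≤ m → ∀ x : X,
    N m (coc A n m x) ≤ M * (((m : ℝ) / (n : ℝ)) ^ a) * N n x

/-!
For the forward direction take `l = min λ b` and
`‖x‖_n = sup_{k ≥ n} (k/n)^l ‖𝓐(k,n) P_n x‖ + sup_{1 ≤ k ≤ n} (n/k)^l ‖𝓐(k,n) Q_n x‖
  + sup_{k ≥ n} (k/n)^{-b} ‖𝓐(k,n) Q_n x‖`,
where for `k ≤ n` the operator `𝓐(k,n) Q_n` inverts `𝓐(n,k)` on the unstable spaces. The
nonuniform bounds make every weighted term at most a multiple of `n^ε ‖x‖`, which gives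
`‖x‖ ≤ ‖x‖_n ≤ C n^{2ε} ‖x‖`. Since `𝓐(k,m) 𝓐(m,n) = 𝓐(k,n)`, each supremum at time `m` of
`𝓐(m,n)x` is a supremum over part of the family at time `n`, with weights rescaled by a power
of `m/n`; unstable terms that move between the backward and the forward family have their
weights compared through `l ≤ b`, and the damping `(k/n)^{-b}` absorbs the growth bound.
Conversely, `‖x‖ ≤ ‖x‖_m ≤ C m^ε ‖x‖` turns the uniform bounds into nonuniform ones, with
`ε` doubled.
-/

lemma div_rpow_mul_div_rpow {a b c : ℝ} (ha : 0 ≤ a) (hb : 0 < b) (hc : 0 ≤ c) (e : ℝ) :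
    (a / b) ^ e * (b / c) ^ e = (a / c) ^ e := by
  rw [← Real.mul_rpow (by positivity) (by positivity), div_mul_div_cancel₀ hb.ne']

lemma div_rpow_neg {a b : ℝ} (ha : 0 ≤ a) (hb : 0 ≤ b) (e : ℝ) :
    (a / b) ^ (-e) = (b / a) ^ e := by
  rw [Real.rpow_neg (by positivity), ← Real.inv_rpow (by positivity), inv_div]

lemma div_rpow_mul_div_rpow_self {a b : ℝ} (ha : 0 < a) (hb : 0 < b) (e : ℝ) :
    (a / b) ^ e * (b / a) ^ e = 1 := by
  rw [div_rpow_mul_div_rpow ha.le hb ha.le, div_self ha.ne', Real.one_rpow]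

lemma one_le_natCast_div {m n : ℕ} (hn : 1 ≤ n) (hnm : n ≤ m) : (1 : ℝ) ≤ m / n := by
  rw [one_le_div (Nat.cast_pos.2 (by omega))]
  exact_mod_cast hnm

lemma natCast_div_le_one {m n : ℕ} (hn : 1 ≤ n) (hmn : m ≤ n) : (m : ℝ) / n ≤ 1 := by
  rw [div_le_one (Nat.cast_pos.2 (by omega))]
  exact_mod_cast hmn

lemma one_le_natCast_rpow {n : ℕ} (hn : 1 ≤ n) {ε : ℝ} (hε : 0 ≤ ε) : 1 ≤ (n : ℝ) ^ ε :=
  Real.one_le_rpow (Nat.one_le_cast.2 hn) hε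

lemma natCast_rpow_two_mul {n : ℕ} (hn : 1 ≤ n) (ε : ℝ) :
    (n : ℝ) ^ (2 * ε) = (n : ℝ) ^ ε * (n : ℝ) ^ ε := by
  rw [two_mul, Real.rpow_add (Nat.cast_pos.2 (by omega))]

lemma natCast_rpow_le_two_mul {n : ℕ} (hn : 1 ≤ n) {ε : ℝ} (hε : 0 ≤ ε) :
    (n : ℝ) ^ ε ≤ (n : ℝ) ^ (2 * ε) :=
  Real.rpow_le_rpow_of_exponent_le (Nat.one_le_cast.2 hn) (by linarith)

section WeightedSup

variable {ι E F : Type*} [SeminormedAddCommGroup F] {p : ι → Prop} {w : ι → ℝ} {T : ι → E → F}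

noncomputable def weightedSup (p : ι → Prop) (w : ι → ℝ) (T : ι → E → F) (x : E) : ℝ :=
  ⨆ i, ⨆ (_ : p i), w i * ‖T i x‖

lemma weightedSup_nonneg (hw : ∀ i, p i → 0 ≤ w i) (x : E) : 0 ≤ weightedSup p w T x :=
  Real.iSup_nonneg fun i => Real.iSup_nonneg fun hi => mul_nonneg (hw i hi) (norm_nonneg _)

lemma weightedSup_le {x : E} {B : ℝ} (hB : 0 ≤ B) (h : ∀ i, p i → w i * ‖T i x‖ ≤ B) :
    weightedSup p w T x ≤ B :=
  Real.iSup_le (fun i => Real.iSup_le (h i) hB) hB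

lemma le_weightedSup {x : E} {B : ℝ} (hB : ∀ i, p i → w i * ‖T i x‖ ≤ B) {i : ι} (hi : p i) :
    w i * ‖T i x‖ ≤ weightedSup p w T x := by
  refine le_ciSup_of_le ⟨max B 0, ?_⟩ i
    (le_ciSup (f := fun _ : p i => w i * ‖T i x‖) (Set.finite_range _).bddAbove hi)
  rintro _ ⟨j, rfl⟩
  exact Real.iSup_le (fun hj => (hB j hj).trans (le_max_left _ _)) (le_max_right _ _)

lemma weightedSup_eq_zero {x : E} (h : ∀ i, p i → T i x = 0) : weightedSup p w T x = 0 :=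
  le_antisymm (weightedSup_le le_rfl fun i hi => by simp [h i hi])
    (Real.iSup_nonneg fun i => Real.iSup_nonneg fun hi => by simp [h i hi])

variable [AddCommGroup E] [Module ℝ E] [NormedSpace ℝ F]

lemma weightedSup_add_le (hw : ∀ i, p i → 0 ≤ w i) (hT : ∀ i, p i → IsLinearMap ℝ (T i))
    {x y : E} {Bx By : ℝ} (hx : ∀ i, p i → w i * ‖T i x‖ ≤ Bx)
    (hy : ∀ i, p i → w i * ‖T i y‖ ≤ By) :
    weightedSup p w T (x + y) ≤ weightedSup p w T x + weightedSup p w T y := by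
  refine weightedSup_le (add_nonneg (weightedSup_nonneg hw x) (weightedSup_nonneg hw y))
    fun i hi => ?_
  calc w i * ‖T i (x + y)‖ ≤ w i * ‖T i x‖ + w i * ‖T i y‖ := by
        rw [(hT i hi).map_add, ← mul_add]
        exact mul_le_mul_of_nonneg_left (norm_add_le _ _) (hw i hi)
    _ ≤ _ := add_le_add (le_weightedSup hx hi) (le_weightedSup hy hi)

lemma weightedSup_smul (hT : ∀ i, p i → IsLinearMap ℝ (T i)) (c : ℝ) (x : E) :
    weightedSup p w T (c • x) = |c| * weightedSup p w T x := by
  simp only [weightedSup, Real.mul_iSup_of_nonneg (abs_nonneg c)]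
  refine iSup_congr fun i => iSup_congr fun hi => ?_
  rw [(hT i hi).map_smul, norm_smul, Real.norm_eq_abs]
  ring

end WeightedSup

lemma coc_self_apply (A : ℕ → X →L[ℝ] X) (n : ℕ) (x : X) : coc A n n x = x := by
  cases n <;> simp [coc]

lemma coc_succ_apply (A : ℕ → X →L[ℝ] X) {n m : ℕ} (h : n ≤ m) (x : X) :
    coc A n (m + 1) x = A m (coc A n m x) := by
  simp [coc, h]

lemma coc_coc_apply (A : ℕ → X →L[ℝ] X) {n k m : ℕ} (hnk : n ≤ k) (hkm : k ≤ m) (x : X) :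
    coc A k m (coc A n k x) = coc A n m x := by
  induction m, hkm using Nat.le_induction with
  | base => rw [coc_self_apply]
  | succ m hm ih => rw [coc_succ_apply A hm, coc_succ_apply A (hnk.trans hm), ih]

lemma coc_map_of_commute {A P : ℕ → X →L[ℝ] X}
    (hC : ∀ j, 1 ≤ j → ∀ x, A j (P j x) = P (j + 1) (A j x))
    {n m : ℕ} (hn : 1 ≤ n) (hnm : n ≤ m) (x : X) :
    P m (coc A n m x) = coc A n m (P n x) := by
  induction m, hnm using Nat.le_induction with
  | base => rw [coc_self_apply, coc_self_apply]
  | succ m hm ih => rw [coc_succ_apply A hm, coc_succ_apply A hm, ← hC m (hn.trans hm), ih]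

lemma existsUnique_coc_eq_of_ker {A P : ℕ → X →L[ℝ] X}
    (hC : ∀ j, 1 ≤ j → ∀ x, A j (P j x) = P (j + 1) (A j x))
    (hI : ∀ j, 1 ≤ j → ∀ y, P (j + 1) y = 0 → ∃! x, P j x = 0 ∧ A j x = y)
    {m n : ℕ} (hm : 1 ≤ m) (hmn : m ≤ n) {y : X} (hy : P n y = 0) :
    ∃! u, P m u = 0 ∧ coc A m n u = y := by
  induction n, hmn using Nat.le_induction generalizing y with
  | base => exact ⟨y, ⟨hy, coc_self_apply A m y⟩, fun u hu => by rw [← hu.2, coc_self_apply]⟩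
  | succ n hn ih =>
    obtain ⟨x, ⟨hx0, rfl⟩, hx_uniq⟩ := hI n (hm.trans hn) y hy
    obtain ⟨u, ⟨hu0, rfl⟩, hu_uniq⟩ := ih hx0
    refine ⟨u, ⟨hu0, coc_succ_apply A hn u⟩, fun u' ⟨hu'0, hu'⟩ => hu_uniq u' ⟨hu'0, ?_⟩⟩
    rw [coc_succ_apply A hn] at hu'
    refine hx_uniq _ ⟨?_, hu'⟩
    rw [coc_map_of_commute hC hm hn, hu'0, map_zero]

open Classical in
/-- For `m ≤ n`, the inverse of `𝓐(n,m) : Ker P_m → Ker P_n` (junk value `0` off `Ker P_n`). -/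
noncomputable def cocInv (A P : ℕ → X →L[ℝ] X) (m n : ℕ) (y : X) : X :=
  if h : ∃ u, P m u = 0 ∧ coc A m n u = y then h.choose else 0

lemma cocInv_spec {A P : ℕ → X →L[ℝ] X} {m n : ℕ} {y : X}
    (h : ∃ u, P m u = 0 ∧ coc A m n u = y) :
    P m (cocInv A P m n y) = 0 ∧ coc A m n (cocInv A P m n y) = y := by
  classical
  rw [cocInv, dif_pos h]
  exact h.choose_spec

lemma isLinearMap_coc_comp (A : ℕ → X →L[ℝ] X) (n k : ℕ) (S : X →L[ℝ] X) :
    IsLinearMap ℝ fun x => coc A n k (S x) :=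
  ((coc A n k).comp S).toLinearMap.isLinear

lemma isLinearMap_coc_sub (A P : ℕ → X →L[ℝ] X) (n k : ℕ) :
    IsLinearMap ℝ fun x => coc A n k (x - P n x) :=
  isLinearMap_coc_comp A n k (1 - P n)

noncomputable def stableSup (A P : ℕ → X →L[ℝ] X) (l : ℝ) (n : ℕ) : X → ℝ :=
  weightedSup (n ≤ ·) (fun k => ((k : ℝ) / n) ^ l) fun k x => coc A n k (P n x)

noncomputable def backwardSup (A P : ℕ → X →L[ℝ] X) (l : ℝ) (n : ℕ) : X → ℝ :=
  weightedSup (· ∈ Set.Icc 1 n) (fun k => ((n : ℝ) / k) ^ l) fun k x => cocInv A P k n (x - P n x)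

noncomputable def forwardSup (A P : ℕ → X →L[ℝ] X) (b : ℝ) (n : ℕ) : X → ℝ :=
  weightedSup (n ≤ ·) (fun k => ((k : ℝ) / n) ^ (-b)) fun k x => coc A n k (x - P n x)

noncomputable def adaptedNorm (A P : ℕ → X →L[ℝ] X) (l b : ℝ) (n : ℕ) (x : X) : ℝ :=
  stableSup A P l n x + backwardSup A P l n x + forwardSup A P b n x

lemma stableSup_nonneg (A P : ℕ → X →L[ℝ] X) (l : ℝ) (n : ℕ) (x : X) :
    0 ≤ stableSup A P l n x :=
  weightedSup_nonneg (fun _ _ => by positivity) x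

lemma backwardSup_nonneg (A P : ℕ → X →L[ℝ] X) (l : ℝ) (n : ℕ) (x : X) :
    0 ≤ backwardSup A P l n x :=
  weightedSup_nonneg (fun _ _ => by positivity) x

lemma forwardSup_nonneg (A P : ℕ → X →L[ℝ] X) (b : ℝ) (n : ℕ) (x : X) :
    0 ≤ forwardSup A P b n x :=
  weightedSup_nonneg (fun _ _ => by positivity) x

lemma stableSup_eq_zero_of_ker {A P : ℕ → X →L[ℝ] X} {l : ℝ} {m : ℕ} {u : X} (hu : P m u = 0) :
    stableSup A P l m u = 0 :=
  weightedSup_eq_zero fun k _ => by simp [hu]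

lemma forwardSup_eq_zero_of_proj_eq {A P : ℕ → X →L[ℝ] X} {b : ℝ} {m : ℕ} {y : X}
    (hy : P m y = y) : forwardSup A P b m y = 0 :=
  weightedSup_eq_zero fun k _ => by simp [hy]

structure StrongDichotomy (A P : ℕ → X →L[ℝ] X) (D l ε K b : ℝ) : Prop where
  D_nonneg : 0 ≤ D
  l_nonneg : 0 ≤ l
  ε_nonneg : 0 ≤ ε
  K_nonneg : 0 ≤ K
  l_le_b : l ≤ b
  proj_idem : ∀ n, 1 ≤ n → ∀ x, P n (P n x) = P n x
  commute : ∀ n, 1 ≤ n → ∀ x, A n (P n x) = P (n + 1) (A n x)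
  existsUnique_ker : ∀ n, 1 ≤ n → ∀ y, P (n + 1) y = 0 → ∃! x, P n x = 0 ∧ A n x = y
  stable : ∀ m n, 1 ≤ n → n ≤ m → ∀ x,
    ‖coc A n m (P n x)‖ ≤ D * ((m : ℝ) / n) ^ (-l) * (n : ℝ) ^ ε * ‖x‖
  unstable : ∀ m n, 1 ≤ m → m ≤ n → ∀ u x, P m u = 0 → coc A m n u = x - P n x →
    ‖u‖ ≤ D * ((m : ℝ) / n) ^ l * (n : ℝ) ^ ε * ‖x‖
  growth : ∀ m n, 1 ≤ n → n ≤ m → ∀ x,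
    ‖coc A n m x‖ ≤ K * ((m : ℝ) / n) ^ b * (n : ℝ) ^ ε * ‖x‖

namespace StrongDichotomy

variable {A P : ℕ → X →L[ℝ] X} {D l ε K b : ℝ} (hd : StrongDichotomy A P D l ε K b)
include hd

lemma b_nonneg : 0 ≤ b := hd.l_nonneg.trans hd.l_le_b

lemma proj_coc {n m : ℕ} (hn : 1 ≤ n) (hnm : n ≤ m) (x : X) :
    P m (coc A n m x) = coc A n m (P n x) :=
  coc_map_of_commute hd.commute hn hnm x

lemma proj_sub_proj {n : ℕ} (hn : 1 ≤ n) (x : X) : P n (x - P n x) = 0 := by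
  rw [map_sub, hd.proj_idem n hn, sub_self]

lemma cocInv_spec_of_ker {m n : ℕ} (hm : 1 ≤ m) (hmn : m ≤ n) {y : X} (hy : P n y = 0) :
    P m (cocInv A P m n y) = 0 ∧ coc A m n (cocInv A P m n y) = y :=
  cocInv_spec (existsUnique_coc_eq_of_ker hd.commute hd.existsUnique_ker hm hmn hy).exists

lemma cocInv_coc {m n : ℕ} (hm : 1 ≤ m) (hmn : m ≤ n) {u : X} (hu : P m u = 0) :
    cocInv A P m n (coc A m n u) = u := by
  have hv : P n (coc A m n u) = 0 := by rw [hd.proj_coc hm hmn, hu, map_zero]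
  exact (existsUnique_coc_eq_of_ker hd.commute hd.existsUnique_ker hm hmn hv).unique
    (hd.cocInv_spec_of_ker hm hmn hv) ⟨hu, rfl⟩

lemma isLinearMap_cocInv_sub_proj {m n : ℕ} (hm : 1 ≤ m) (hmn : m ≤ n) :
    IsLinearMap ℝ fun x => cocInv A P m n (x - P n x) := by
  have hn := hm.trans hmn
  have spec := fun x => hd.cocInv_spec_of_ker hm hmn (hd.proj_sub_proj hn x)
  refine ⟨fun x y => ?_, fun c x => ?_⟩
  · have hker : P m (cocInv A P m n (x - P n x) + cocInv A P m n (y - P n y)) = 0 := by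
      rw [map_add, (spec x).1, (spec y).1, add_zero]
    rw [← hd.cocInv_coc hm hmn hker, map_add (coc A m n), (spec x).2, (spec y).2, map_add (P n)]
    congr 1
    abel
  · have hker : P m (c • cocInv A P m n (x - P n x)) = 0 := by
      rw [map_smul, (spec x).1, smul_zero]
    rw [← hd.cocInv_coc hm hmn hker, map_smul (coc A m n), (spec x).2, map_smul (P n), smul_sub]

lemma sub_proj_coc {n m : ℕ} (hn : 1 ≤ n) (hnm : n ≤ m) (x : X) :
    coc A n m x - P m (coc A n m x) = coc A n m (x - P n x) := by
  rw [hd.proj_coc hn hnm, map_sub]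

lemma stableTerm_le {n k : ℕ} (hn : 1 ≤ n) (hk : n ≤ k) (x : X) :
    ((k : ℝ) / n) ^ l * ‖coc A n k (P n x)‖ ≤ D * (n : ℝ) ^ ε * ‖x‖ := by
  have hn' : (0 : ℝ) < n := Nat.cast_pos.2 (by omega)
  have hk' : (0 : ℝ) < k := Nat.cast_pos.2 (by omega)
  calc ((k : ℝ) / n) ^ l * ‖coc A n k (P n x)‖
      ≤ ((k : ℝ) / n) ^ l * (D * ((k : ℝ) / n) ^ (-l) * (n : ℝ) ^ ε * ‖x‖) := by
        gcongr
        exact hd.stable k n hn hk x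
    _ = ((k : ℝ) / n) ^ l * ((n : ℝ) / k) ^ l * (D * (n : ℝ) ^ ε * ‖x‖) := by
        rw [div_rpow_neg hk'.le hn'.le]
        ring
    _ = D * (n : ℝ) ^ ε * ‖x‖ := by rw [div_rpow_mul_div_rpow_self hk' hn', one_mul]

lemma backwardTerm_le {n k : ℕ} (hk : k ∈ Set.Icc 1 n) (x : X) :
    ((n : ℝ) / k) ^ l * ‖cocInv A P k n (x - P n x)‖ ≤ D * (n : ℝ) ^ ε * ‖x‖ := by
  have hn' : (0 : ℝ) < n := Nat.cast_pos.2 (by grind)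
  have hk' : (0 : ℝ) < k := Nat.cast_pos.2 (by grind)
  have spec := hd.cocInv_spec_of_ker hk.1 hk.2 (hd.proj_sub_proj (hk.1.trans hk.2) x)
  calc ((n : ℝ) / k) ^ l * ‖cocInv A P k n (x - P n x)‖
      ≤ ((n : ℝ) / k) ^ l * (D * ((k : ℝ) / n) ^ l * (n : ℝ) ^ ε * ‖x‖) := by
        gcongr
        exact hd.unstable k n hk.1 hk.2 _ x spec.1 spec.2
    _ = ((n : ℝ) / k) ^ l * ((k : ℝ) / n) ^ l * (D * (n : ℝ) ^ ε * ‖x‖) := by ring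
    _ = D * (n : ℝ) ^ ε * ‖x‖ := by rw [div_rpow_mul_div_rpow_self hn' hk', one_mul]

lemma forwardTerm_le {n k : ℕ} (hn : 1 ≤ n) (hk : n ≤ k) (y : X) :
    ((k : ℝ) / n) ^ (-b) * ‖coc A n k y‖ ≤ K * (n : ℝ) ^ ε * ‖y‖ := by
  have hn' : (0 : ℝ) < n := Nat.cast_pos.2 (by omega)
  have hk' : (0 : ℝ) < k := Nat.cast_pos.2 (by omega)
  calc ((k : ℝ) / n) ^ (-b) * ‖coc A n k y‖
      ≤ ((k : ℝ) / n) ^ (-b) * (K * ((k : ℝ) / n) ^ b * (n : ℝ) ^ ε * ‖y‖) := by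
        gcongr
        exact hd.growth k n hn hk y
    _ = ((n : ℝ) / k) ^ b * ((k : ℝ) / n) ^ b * (K * (n : ℝ) ^ ε * ‖y‖) := by
        rw [div_rpow_neg hk'.le hn'.le]
        ring
    _ = K * (n : ℝ) ^ ε * ‖y‖ := by rw [div_rpow_mul_div_rpow_self hn' hk', one_mul]

lemma norm_proj_le {n : ℕ} (hn : 1 ≤ n) (x : X) : ‖P n x‖ ≤ D * (n : ℝ) ^ ε * ‖x‖ := by
  have hn' : (n : ℝ) ≠ 0 := Nat.cast_ne_zero.2 (by omega)
  simpa [coc_self_apply, div_self hn'] using hd.stableTerm_le hn le_rfl x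

lemma norm_sub_proj_le {n : ℕ} (hn : 1 ≤ n) (x : X) :
    ‖x - P n x‖ ≤ (1 + D * (n : ℝ) ^ ε) * ‖x‖ := by
  linarith [norm_sub_le x (P n x), hd.norm_proj_le hn x]

lemma le_stableSup {n k : ℕ} (hn : 1 ≤ n) (hk : n ≤ k) (x : X) :
    ((k : ℝ) / n) ^ l * ‖coc A n k (P n x)‖ ≤ stableSup A P l n x := by
  unfold stableSup
  exact le_weightedSup (T := fun k x => coc A n k (P n x)) (fun _ hi => hd.stableTerm_le hn hi x) hk

lemma le_backwardSup {n k : ℕ} (hk : k ∈ Set.Icc 1 n) (x : X) :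
    ((n : ℝ) / k) ^ l * ‖cocInv A P k n (x - P n x)‖ ≤ backwardSup A P l n x := by
  unfold backwardSup
  exact le_weightedSup (T := fun k x => cocInv A P k n (x - P n x))
    (fun _ hi => hd.backwardTerm_le hi x) hk

lemma le_forwardSup {n k : ℕ} (hn : 1 ≤ n) (hk : n ≤ k) (x : X) :
    ((k : ℝ) / n) ^ (-b) * ‖coc A n k (x - P n x)‖ ≤ forwardSup A P b n x := by
  unfold forwardSup
  exact le_weightedSup (T := fun k x => coc A n k (x - P n x))
    (fun _ hi => hd.forwardTerm_le hn hi _) hk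

lemma norm_le_adaptedNorm {n : ℕ} (hn : 1 ≤ n) (x : X) : ‖x‖ ≤ adaptedNorm A P l b n x := by
  have hn' : (n : ℝ) ≠ 0 := Nat.cast_ne_zero.2 (by omega)
  have hS : ‖P n x‖ ≤ stableSup A P l n x := by
    simpa [coc_self_apply, div_self hn'] using hd.le_stableSup hn le_rfl x
  have hQ : cocInv A P n n (x - P n x) = x - P n x := by
    simpa only [coc_self_apply] using hd.cocInv_coc hn le_rfl (hd.proj_sub_proj hn x)
  have hB : ‖x - P n x‖ ≤ backwardSup A P l n x := by
    simpa [hQ, div_self hn'] using hd.le_backwardSup ⟨hn, le_rfl⟩ x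
  have hx : ‖x‖ ≤ ‖P n x‖ + ‖x - P n x‖ := by
    simpa using norm_add_le (P n x) (x - P n x)
  unfold adaptedNorm
  linarith [forwardSup_nonneg A P b n x, hx]

lemma adaptedNorm_le {n : ℕ} (hn : 1 ≤ n) (x : X) :
    adaptedNorm A P l b n x ≤ (2 * D + K + K * D) * (n : ℝ) ^ (2 * ε) * ‖x‖ := by
  set t := (n : ℝ) ^ ε
  have ht : 1 ≤ t := one_le_natCast_rpow hn hd.ε_nonneg
  have hS : stableSup A P l n x ≤ D * t * ‖x‖ :=
    weightedSup_le (by positivity [hd.D_nonneg]) fun _ hi => hd.stableTerm_le hn hi x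
  have hB : backwardSup A P l n x ≤ D * t * ‖x‖ :=
    weightedSup_le (by positivity [hd.D_nonneg]) fun _ hi => hd.backwardTerm_le hi x
  have hF : forwardSup A P b n x ≤ K * t * ((1 + D * t) * ‖x‖) :=
    (weightedSup_le (by positivity [hd.K_nonneg]) fun _ hi => hd.forwardTerm_le hn hi _).trans
      (by gcongr; exacts [by positivity [hd.K_nonneg], hd.norm_sub_proj_le hn x])
  have htt : t * ‖x‖ ≤ t * t * ‖x‖ := by gcongr; nlinarith
  calc adaptedNorm A P l b n x ≤ D * t * ‖x‖ + D * t * ‖x‖ + K * t * ((1 + D * t) * ‖x‖) := by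
        unfold adaptedNorm
        linarith
    _ = (2 * D + K) * (t * ‖x‖) + K * D * (t * t * ‖x‖) := by ring
    _ ≤ (2 * D + K) * (t * t * ‖x‖) + K * D * (t * t * ‖x‖) := by
        gcongr
        linarith [hd.D_nonneg, hd.K_nonneg]
    _ = (2 * D + K + K * D) * (n : ℝ) ^ (2 * ε) * ‖x‖ := by
        rw [natCast_rpow_two_mul hn]
        ring

lemma adaptedNorm_add_le {n : ℕ} (hn : 1 ≤ n) (x y : X) :
    adaptedNorm A P l b n (x + y) ≤ adaptedNorm A P l b n x + adaptedNorm A P l b n y := by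
  have hS : stableSup A P l n (x + y) ≤ stableSup A P l n x + stableSup A P l n y := by
    unfold stableSup
    exact weightedSup_add_le (fun _ _ => by positivity)
      (fun k _ => isLinearMap_coc_comp A n k (P n))
      (fun _ hi => hd.stableTerm_le hn hi x) (fun _ hi => hd.stableTerm_le hn hi y)
  have hB : backwardSup A P l n (x + y) ≤ backwardSup A P l n x + backwardSup A P l n y := by
    unfold backwardSup
    exact weightedSup_add_le (fun _ _ => by positivity)
      (fun _ hk => hd.isLinearMap_cocInv_sub_proj hk.1 hk.2)
      (fun _ hi => hd.backwardTerm_le hi x) (fun _ hi => hd.backwardTerm_le hi y)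
  have hF : forwardSup A P b n (x + y) ≤ forwardSup A P b n x + forwardSup A P b n y := by
    unfold forwardSup
    exact weightedSup_add_le (fun _ _ => by positivity) (fun k _ => isLinearMap_coc_sub A P n k)
      (fun _ hi => hd.forwardTerm_le hn hi (x - P n x))
      (fun _ hi => hd.forwardTerm_le hn hi (y - P n y))
  unfold adaptedNorm
  linarith

lemma adaptedNorm_smul (n : ℕ) (c : ℝ) (x : X) :
    adaptedNorm A P l b n (c • x) = |c| * adaptedNorm A P l b n x := by
  unfold adaptedNorm stableSup backwardSup forwardSup
  rw [weightedSup_smul (fun k _ => isLinearMap_coc_comp A n k (P n)),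
    weightedSup_smul (fun _ hk => hd.isLinearMap_cocInv_sub_proj hk.1 hk.2),
    weightedSup_smul (fun k _ => isLinearMap_coc_sub A P n k)]
  ring

lemma backwardSup_eq_zero_of_proj_eq {m : ℕ} {y : X} (hy : P m y = y) :
    backwardSup A P l m y = 0 :=
  weightedSup_eq_zero fun k (hk : k ∈ Set.Icc 1 m) => by
    simpa [hy] using hd.cocInv_coc hk.1 hk.2 (map_zero (P k))

lemma stableSup_proj {n : ℕ} (hn : 1 ≤ n) (x : X) :
    stableSup A P l n (P n x) = stableSup A P l n x := by
  simp only [stableSup, weightedSup, hd.proj_idem n hn]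

lemma stableSup_coc_le {n m : ℕ} (hn : 1 ≤ n) (hnm : n ≤ m) (x : X) :
    stableSup A P l m (coc A n m x) ≤ ((m : ℝ) / n) ^ (-l) * stableSup A P l n x := by
  have hn' : (0 : ℝ) < n := Nat.cast_pos.2 (by omega)
  have hm' : (0 : ℝ) < m := Nat.cast_pos.2 (by omega)
  refine weightedSup_le (by positivity [stableSup_nonneg A P l n x]) fun k (hk : m ≤ k) => ?_
  calc ((k : ℝ) / m) ^ l * ‖coc A m k (P m (coc A n m x))‖
      = ((m : ℝ) / n) ^ (-l) * (((k : ℝ) / n) ^ l * ‖coc A n k (P n x)‖) := by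
        rw [hd.proj_coc hn hnm, coc_coc_apply A hnm hk, div_rpow_neg hm'.le hn'.le,
          ← div_rpow_mul_div_rpow (Nat.cast_nonneg k) hn' hm'.le]
        ring
    _ ≤ ((m : ℝ) / n) ^ (-l) * stableSup A P l n x := by
        gcongr
        exact hd.le_stableSup hn (hnm.trans hk) x

lemma forwardSup_coc_le {n m : ℕ} (hn : 1 ≤ n) (hnm : n ≤ m) (x : X) :
    forwardSup A P b m (coc A n m x) ≤ ((m : ℝ) / n) ^ b * forwardSup A P b n x := by
  have hn' : (0 : ℝ) < n := Nat.cast_pos.2 (by omega)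
  have hm' : (0 : ℝ) < m := Nat.cast_pos.2 (by omega)
  refine weightedSup_le (by positivity [forwardSup_nonneg A P b n x]) fun k (hk : m ≤ k) => ?_
  calc ((k : ℝ) / m) ^ (-b) * ‖coc A m k (coc A n m x - P m (coc A n m x))‖
      = ((m : ℝ) / n) ^ b * (((k : ℝ) / n) ^ (-b) * ‖coc A n k (x - P n x)‖) := by
        rw [hd.sub_proj_coc hn hnm, coc_coc_apply A hnm hk, ← div_rpow_neg hn'.le hm'.le,
          ← div_rpow_mul_div_rpow (Nat.cast_nonneg k) hn' hm'.le]
        ring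
    _ ≤ ((m : ℝ) / n) ^ b * forwardSup A P b n x := by
        gcongr
        exact hd.le_forwardSup hn (hnm.trans hk) x

lemma backwardSup_coc_le {n m : ℕ} (hn : 1 ≤ n) (hnm : n ≤ m) (x : X) :
    backwardSup A P l m (coc A n m x) ≤
      ((m : ℝ) / n) ^ (b + l) * (backwardSup A P l n x + forwardSup A P b n x) := by
  have hn' : (0 : ℝ) < n := Nat.cast_pos.2 (by omega)
  have hm' : (0 : ℝ) < m := Nat.cast_pos.2 (by omega)
  have hmn := one_le_natCast_div hn hnm
  have hq : P n (x - P n x) = 0 := hd.proj_sub_proj hn x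
  have hB := backwardSup_nonneg A P l n x
  have hF := forwardSup_nonneg A P b n x
  refine weightedSup_le (by positivity) fun k (hk : k ∈ Set.Icc 1 m) => ?_
  have hk' : (0 : ℝ) < k := Nat.cast_pos.2 (by grind)
  rw [hd.sub_proj_coc hn hnm]
  rcases le_total k n with hkn | hnk
  · obtain ⟨hu, hcu⟩ := hd.cocInv_spec_of_ker hk.1 hkn hq
    set u := cocInv A P k n (x - P n x)
    have hinv : cocInv A P k m (coc A n m (x - P n x)) = u := by
      rw [← hcu, coc_coc_apply A hkn hnm, hd.cocInv_coc hk.1 (hkn.trans hnm) hu]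
    calc ((m : ℝ) / k) ^ l * ‖cocInv A P k m (coc A n m (x - P n x))‖
        = ((m : ℝ) / n) ^ l * (((n : ℝ) / k) ^ l * ‖u‖) := by
          rw [hinv, ← div_rpow_mul_div_rpow hm'.le hn' hk'.le]
          ring
      _ ≤ ((m : ℝ) / n) ^ (b + l) * (backwardSup A P l n x + forwardSup A P b n x) := by
          refine mul_le_mul (Real.rpow_le_rpow_of_exponent_le hmn (by linarith [hd.b_nonneg]))
            ?_ (by positivity) (by positivity)
          linarith [hd.le_backwardSup ⟨hk.1, hkn⟩ x]
  · set z := coc A n k (x - P n x)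
    have hz : P k z = 0 := by rw [hd.proj_coc hn hnk, hq, map_zero]
    have hinv : cocInv A P k m (coc A n m (x - P n x)) = z := by
      rw [← coc_coc_apply A hnk hk.2, hd.cocInv_coc (hn.trans hnk) hk.2 hz]
    have hw : ((m : ℝ) / k) ^ l ≤ ((m : ℝ) / n) ^ (b + l) * ((k : ℝ) / n) ^ (-b) := by
      calc ((m : ℝ) / k) ^ l ≤ ((m : ℝ) / n) ^ l := by
            gcongr
            exact hd.l_nonneg
        _ ≤ ((m : ℝ) / n) ^ l * ((m : ℝ) / k) ^ b :=
            le_mul_of_one_le_right (by positivity)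
              (Real.one_le_rpow (one_le_natCast_div hk.1 hk.2) hd.b_nonneg)
        _ = ((m : ℝ) / n) ^ (b + l) * ((k : ℝ) / n) ^ (-b) := by
            rw [div_rpow_neg hk'.le hn'.le, Real.rpow_add (by positivity),
              ← div_rpow_mul_div_rpow hm'.le hn' hk'.le]
            ring
    calc ((m : ℝ) / k) ^ l * ‖cocInv A P k m (coc A n m (x - P n x))‖
        ≤ ((m : ℝ) / n) ^ (b + l) * (((k : ℝ) / n) ^ (-b) * ‖z‖) := by
          rw [hinv, ← mul_assoc]
          exact mul_le_mul_of_nonneg_right hw (norm_nonneg z)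
      _ ≤ ((m : ℝ) / n) ^ (b + l) * (backwardSup A P l n x + forwardSup A P b n x) := by
          gcongr
          linarith [hd.le_forwardSup hn hnk x]

lemma backwardSup_le_of_ker {m n : ℕ} (hm : 1 ≤ m) (hmn : m ≤ n) {u : X} (hu : P m u = 0) :
    backwardSup A P l m u ≤ ((m : ℝ) / n) ^ l * backwardSup A P l n (coc A m n u) := by
  have hn' : (0 : ℝ) < n := Nat.cast_pos.2 (by omega)
  have hv : P n (coc A m n u) = 0 := by rw [hd.proj_coc hm hmn, hu, map_zero]
  refine weightedSup_le (by positivity [backwardSup_nonneg A P l n (coc A m n u)])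
    fun k (hk : k ∈ Set.Icc 1 m) => ?_
  have hk' : (0 : ℝ) < k := Nat.cast_pos.2 (by grind)
  rw [hu, sub_zero]
  obtain ⟨hw, hcw⟩ := hd.cocInv_spec_of_ker hk.1 hk.2 hu
  have hinv : cocInv A P k n (coc A m n u - P n (coc A m n u)) = cocInv A P k m u := by
    conv_lhs => rw [hv, sub_zero, ← hcw, coc_coc_apply A hk.2 hmn]
    exact hd.cocInv_coc hk.1 (hk.2.trans hmn) hw
  calc ((m : ℝ) / k) ^ l * ‖cocInv A P k m u‖
      = ((m : ℝ) / n) ^ l * (((n : ℝ) / k) ^ l *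
          ‖cocInv A P k n (coc A m n u - P n (coc A m n u))‖) := by
        rw [hinv, ← div_rpow_mul_div_rpow (Nat.cast_nonneg m) hn' hk'.le]
        ring
    _ ≤ ((m : ℝ) / n) ^ l * backwardSup A P l n (coc A m n u) := by
        gcongr
        exact hd.le_backwardSup ⟨hk.1, hk.2.trans hmn⟩ _

lemma forwardSup_le_of_ker {m n : ℕ} (hm : 1 ≤ m) (hmn : m ≤ n) {u : X} (hu : P m u = 0) :
    forwardSup A P b m u ≤ ((m : ℝ) / n) ^ l *
      (backwardSup A P l n (coc A m n u) + forwardSup A P b n (coc A m n u)) := by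
  have hm' : (0 : ℝ) < m := Nat.cast_pos.2 (by omega)
  have hn' : (0 : ℝ) < n := Nat.cast_pos.2 (by omega)
  set v := coc A m n u with hv_def
  have hv : P n v = 0 := by rw [hd.proj_coc hm hmn, hu, map_zero]
  have hB := backwardSup_nonneg A P l n v
  have hF := forwardSup_nonneg A P b n v
  refine weightedSup_le (by positivity) fun k (hk : m ≤ k) => ?_
  have hk' : (0 : ℝ) < k := Nat.cast_pos.2 (by omega)
  have hmk := natCast_div_le_one (hm.trans hk) hk
  rw [hu, sub_zero]
  rcases le_total k n with hkn | hnk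
  · have hw : P k (coc A m k u) = 0 := by rw [hd.proj_coc hm hk, hu, map_zero]
    have hinv : cocInv A P k n (v - P n v) = coc A m k u := by
      rw [hv, sub_zero, hv_def, ← coc_coc_apply A hk hkn u]
      exact hd.cocInv_coc (hm.trans hk) hkn hw
    have hwt : ((k : ℝ) / m) ^ (-b) ≤ ((m : ℝ) / n) ^ l * ((n : ℝ) / k) ^ l := by
      rw [div_rpow_neg hk'.le hm'.le, div_rpow_mul_div_rpow hm'.le hn' hk'.le]
      exact Real.rpow_le_rpow_of_exponent_ge (by positivity) hmk hd.l_le_b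
    calc ((k : ℝ) / m) ^ (-b) * ‖coc A m k u‖
        ≤ ((m : ℝ) / n) ^ l * (((n : ℝ) / k) ^ l * ‖cocInv A P k n (v - P n v)‖) := by
          rw [hinv, ← mul_assoc]
          exact mul_le_mul_of_nonneg_right hwt (norm_nonneg _)
      _ ≤ ((m : ℝ) / n) ^ l * (backwardSup A P l n v + forwardSup A P b n v) := by
          gcongr
          linarith [hd.le_backwardSup ⟨hm.trans hk, hkn⟩ v]
  · have hcc : coc A m k u = coc A n k (v - P n v) := by
      rw [hv, sub_zero, coc_coc_apply A hmn hnk]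
    have hwt : ((k : ℝ) / m) ^ (-b) ≤ ((m : ℝ) / n) ^ l * ((k : ℝ) / n) ^ (-b) := by
      rw [div_rpow_neg hk'.le hm'.le, div_rpow_neg hk'.le hn'.le,
        ← div_rpow_mul_div_rpow hm'.le hn' hk'.le]
      exact mul_le_mul_of_nonneg_right (Real.rpow_le_rpow_of_exponent_ge (by positivity)
        (natCast_div_le_one (hm.trans hmn) hmn) hd.l_le_b) (by positivity)
    calc ((k : ℝ) / m) ^ (-b) * ‖coc A m k u‖
        ≤ ((m : ℝ) / n) ^ l * (((k : ℝ) / n) ^ (-b) * ‖coc A n k (v - P n v)‖) := by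
          rw [hcc, ← mul_assoc]
          exact mul_le_mul_of_nonneg_right hwt (norm_nonneg _)
      _ ≤ ((m : ℝ) / n) ^ l * (backwardSup A P l n v + forwardSup A P b n v) := by
          gcongr
          linarith [hd.le_forwardSup (hm.trans hmn) hnk v]

lemma adaptedNorm_coc_proj_le {n m : ℕ} (hn : 1 ≤ n) (hnm : n ≤ m) (x : X) :
    adaptedNorm A P l b m (coc A n m (P n x)) ≤
      ((m : ℝ) / n) ^ (-l) * adaptedNorm A P l b n x := by
  have hy : P m (coc A n m (P n x)) = coc A n m (P n x) := by
    rw [hd.proj_coc hn hnm, hd.proj_idem n hn]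
  have hS := hd.stableSup_coc_le hn hnm (P n x)
  rw [hd.stableSup_proj hn] at hS
  have hBF : 0 ≤ ((m : ℝ) / n) ^ (-l) * (backwardSup A P l n x + forwardSup A P b n x) :=
    by positivity [backwardSup_nonneg A P l n x, forwardSup_nonneg A P b n x]
  unfold adaptedNorm
  rw [hd.backwardSup_eq_zero_of_proj_eq hy, forwardSup_eq_zero_of_proj_eq hy]
  linarith

lemma adaptedNorm_le_of_ker {m n : ℕ} (hm : 1 ≤ m) (hmn : m ≤ n) {u : X} (hu : P m u = 0) :
    adaptedNorm A P l b m u ≤ 2 * ((m : ℝ) / n) ^ l * adaptedNorm A P l b n (coc A m n u) := by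
  have hB := hd.backwardSup_le_of_ker hm hmn hu
  have hF := hd.forwardSup_le_of_ker hm hmn hu
  have hS : 0 ≤ ((m : ℝ) / n) ^ l * stableSup A P l n (coc A m n u) :=
    by positivity [stableSup_nonneg A P l n (coc A m n u)]
  have hF' : 0 ≤ ((m : ℝ) / n) ^ l * forwardSup A P b n (coc A m n u) :=
    by positivity [forwardSup_nonneg A P b n (coc A m n u)]
  unfold adaptedNorm
  rw [stableSup_eq_zero_of_ker hu]
  linarith

lemma adaptedNorm_coc_le {n m : ℕ} (hn : 1 ≤ n) (hnm : n ≤ m) (x : X) :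
    adaptedNorm A P l b m (coc A n m x) ≤
      2 * ((m : ℝ) / n) ^ (b + l) * adaptedNorm A P l b n x := by
  have hmn := one_le_natCast_div hn hnm
  have hS := hd.stableSup_coc_le hn hnm x
  have hB := hd.backwardSup_coc_le hn hnm x
  have hF := hd.forwardSup_coc_le hn hnm x
  set r := ((m : ℝ) / n) ^ (b + l)
  have hSr : ((m : ℝ) / n) ^ (-l) * stableSup A P l n x ≤ r * stableSup A P l n x :=
    mul_le_mul_of_nonneg_right (Real.rpow_le_rpow_of_exponent_le hmn
      (by linarith [hd.l_nonneg, hd.b_nonneg])) (stableSup_nonneg A P l n x)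
  have hFr : ((m : ℝ) / n) ^ b * forwardSup A P b n x ≤ r * forwardSup A P b n x :=
    mul_le_mul_of_nonneg_right (Real.rpow_le_rpow_of_exponent_le hmn
      (by linarith [hd.l_nonneg])) (forwardSup_nonneg A P b n x)
  have hrS : 0 ≤ r * stableSup A P l n x := by positivity [stableSup_nonneg A P l n x]
  have hrB : 0 ≤ r * backwardSup A P l n x := by positivity [backwardSup_nonneg A P l n x]
  unfold adaptedNorm
  linarith

end StrongDichotomy

lemma StrongDichotomy.of_nupdWith {A P : ℕ → X →L[ℝ] X} {D l ε K b : ℝ}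
    (h : NUPDWith A P D l ε) (hD : 0 ≤ D) (hl : 0 ≤ l) (hε : 0 ≤ ε) (hK : 0 ≤ K) (hlb : l ≤ b)
    (hG : ∀ m n, 1 ≤ n → n ≤ m → ∀ x : X,
      ‖coc A n m x‖ ≤ K * ((m : ℝ) / n) ^ b * (n : ℝ) ^ ε * ‖x‖) :
    StrongDichotomy A P D l ε K b where
  D_nonneg := hD
  l_nonneg := hl
  ε_nonneg := hε
  K_nonneg := hK
  l_le_b := hlb
  proj_idem n hn := ContinuousLinearMap.ext_iff.1 (h.1 n hn)
  commute n hn := ContinuousLinearMap.ext_iff.1 (h.2.1 n hn)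
  existsUnique_ker := h.2.2.1
  stable := h.2.2.2.1
  unstable := h.2.2.2.2
  growth := hG

lemma NUPDWith.mono_exponent {A P : ℕ → X →L[ℝ] X} {D lam l ε : ℝ} (h : NUPDWith A P D lam ε)
    (hD : 0 ≤ D) (hl : l ≤ lam) : NUPDWith A P D l ε := by
  obtain ⟨h1, h2, h3, h4, h5⟩ := h
  refine ⟨h1, h2, h3, fun m n hn hnm x => (h4 m n hn hnm x).trans ?_,
    fun m n hm hmn u x hu hcu => (h5 m n hm hmn u x hu hcu).trans ?_⟩
  · gcongr D * ?_ * _ * _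
    exact Real.rpow_le_rpow_of_exponent_le (one_le_natCast_div hn hnm) (neg_le_neg hl)
  · gcongr D * ?_ * _ * _
    exact Real.rpow_le_rpow_of_exponent_ge (div_pos (Nat.cast_pos.2 hm) (Nat.cast_pos.2 (by omega)))
      (natCast_div_le_one (hm.trans hmn) hmn) hl

lemma exists_adaptedNorms_of_snupd {A : ℕ → X →L[ℝ] X} (h : SNUPD A) :
    ∃ (N : ℕ → X → ℝ) (C ε M a : ℝ), 0 < C ∧ 0 ≤ ε ∧ 0 < M ∧ 0 < a ∧
      AdaptedNorms N C ε ∧ PolyDich A N ∧ Grow A N M a := by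
  obtain ⟨P, D, lam, ε, K, b, hD, hlam, hε, hK, hb, hP, hG⟩ := h
  have hl : 0 < min lam b := lt_min hlam hb
  have hPl := hP.mono_exponent hD.le (min_le_left lam b)
  have hd := StrongDichotomy.of_nupdWith hPl hD.le hl.le hε hK.le (min_le_right lam b) hG
  refine ⟨adaptedNorm A P (min lam b) b, 2 * D + K + K * D, 2 * ε, 2, b + min lam b,
    by positivity, by positivity, two_pos, by positivity,
    fun n hn => ⟨hd.adaptedNorm_add_le hn, hd.adaptedNorm_smul n,
      fun x => ⟨hd.norm_le_adaptedNorm hn x, hd.adaptedNorm_le hn x⟩⟩,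
    ⟨P, 2, min lam b, two_pos, hl, hPl.1, hPl.2.1, hPl.2.2.1, fun m n hn hnm x => ?_,
      fun m n hm hmn u hu => hd.adaptedNorm_le_of_ker hm hmn hu⟩,
    fun m n hn hnm x => hd.adaptedNorm_coc_le hn hnm x⟩
  have : 0 ≤ ((m : ℝ) / n) ^ (-min lam b) * adaptedNorm A P (min lam b) b n x :=
    mul_nonneg (by positivity) ((norm_nonneg x).trans (hd.norm_le_adaptedNorm hn x))
  linarith [hd.adaptedNorm_coc_proj_le hn hnm x]

section FromAdaptedNorms

variable {A P : ℕ → X →L[ℝ] X} {N : ℕ → X → ℝ} {C ε D lam : ℝ}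

lemma AdaptedNorms.norm_le (hN : AdaptedNorms N C ε) {n : ℕ} (hn : 1 ≤ n) (x : X) :
    ‖x‖ ≤ N n x :=
  ((hN n hn).2.2 x).1

lemma AdaptedNorms.le_mul_norm (hN : AdaptedNorms N C ε) {n : ℕ} (hn : 1 ≤ n) (x : X) :
    N n x ≤ C * (n : ℝ) ^ ε * ‖x‖ :=
  ((hN n hn).2.2 x).2

lemma PolyDichWith.norm_proj_le (hP : PolyDichWith A N P D lam) (hN : AdaptedNorms N C ε)
    (hD : 0 ≤ D) {n : ℕ} (hn : 1 ≤ n) (x : X) : ‖P n x‖ ≤ D * C * (n : ℝ) ^ ε * ‖x‖ := by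
  have hP0 := hP.2.2.2.1 n n hn le_rfl x
  rw [coc_self_apply, div_self (Nat.cast_ne_zero.2 (by omega)), Real.one_rpow, mul_one] at hP0
  calc ‖P n x‖ ≤ N n (P n x) := hN.norm_le hn _
    _ ≤ D * N n x := hP0
    _ ≤ D * (C * (n : ℝ) ^ ε * ‖x‖) := by gcongr; exact hN.le_mul_norm hn x
    _ = D * C * (n : ℝ) ^ ε * ‖x‖ := by ring

lemma PolyDichWith.norm_coc_proj_le (hP : PolyDichWith A N P D lam) (hN : AdaptedNorms N C ε)
    (hD : 0 ≤ D) (hC : 0 ≤ C) (hε : 0 ≤ ε) {m n : ℕ} (hn : 1 ≤ n) (hnm : n ≤ m) (x : X) :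
    ‖coc A n m (P n x)‖ ≤
      D * C * (1 + D * C) * ((m : ℝ) / n) ^ (-lam) * (n : ℝ) ^ (2 * ε) * ‖x‖ := by
  calc ‖coc A n m (P n x)‖ ≤ N m (coc A n m (P n x)) := hN.norm_le (hn.trans hnm) _
    _ ≤ D * ((m : ℝ) / n) ^ (-lam) * N n x := hP.2.2.2.1 m n hn hnm x
    _ ≤ D * ((m : ℝ) / n) ^ (-lam) * (C * (n : ℝ) ^ ε * ‖x‖) := by
        gcongr
        exact hN.le_mul_norm hn x
    _ = D * C * ((m : ℝ) / n) ^ (-lam) * (n : ℝ) ^ ε * ‖x‖ := by ring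
    _ ≤ D * C * (1 + D * C) * ((m : ℝ) / n) ^ (-lam) * (n : ℝ) ^ (2 * ε) * ‖x‖ := by
        gcongr ?_ * _ * ?_ * _
        · exact le_mul_of_one_le_right (by positivity) (by linarith [mul_nonneg hD hC])
        · exact natCast_rpow_le_two_mul hn hε

lemma PolyDichWith.norm_le_of_coc_eq (hP : PolyDichWith A N P D lam) (hN : AdaptedNorms N C ε)
    (hD : 0 ≤ D) (hC : 0 ≤ C) (hε : 0 ≤ ε) {m n : ℕ} (hm : 1 ≤ m) (hmn : m ≤ n) {u x : X}
    (hu : P m u = 0) (hcu : coc A m n u = x - P n x) :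
    ‖u‖ ≤ D * C * (1 + D * C) * ((m : ℝ) / n) ^ lam * (n : ℝ) ^ (2 * ε) * ‖x‖ := by
  have hn := hm.trans hmn
  set t := (n : ℝ) ^ ε
  have ht : 1 ≤ t := one_le_natCast_rpow hn hε
  have hQ : ‖x - P n x‖ ≤ (1 + D * C * t) * ‖x‖ := by
    linarith [norm_sub_le x (P n x), hP.norm_proj_le hN hD hn x]
  calc ‖u‖ ≤ N m u := hN.norm_le hm u
    _ ≤ D * ((m : ℝ) / n) ^ lam * N n (x - P n x) := by
        rw [← hcu]
        exact hP.2.2.2.2 m n hm hmn u hu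
    _ ≤ D * ((m : ℝ) / n) ^ lam * (C * t * ((1 + D * C * t) * ‖x‖)) := by
        gcongr
        exact (hN.le_mul_norm hn _).trans (by gcongr)
    _ = D * C * ((m : ℝ) / n) ^ lam * (t * (1 + D * C * t)) * ‖x‖ := by ring
    _ ≤ D * C * ((m : ℝ) / n) ^ lam * ((1 + D * C) * (t * t)) * ‖x‖ := by
        gcongr D * C * _ * ?_ * _
        nlinarith [mul_nonneg hD hC]
    _ = D * C * (1 + D * C) * ((m : ℝ) / n) ^ lam * (n : ℝ) ^ (2 * ε) * ‖x‖ := by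
        rw [natCast_rpow_two_mul hn]
        ring

lemma Grow.norm_coc_le {M a : ℝ} (hG : Grow A N M a) (hN : AdaptedNorms N C ε) (hM : 0 ≤ M)
    (hC : 0 ≤ C) (hε : 0 ≤ ε) {m n : ℕ} (hn : 1 ≤ n) (hnm : n ≤ m) (x : X) :
    ‖coc A n m x‖ ≤ M * C * ((m : ℝ) / n) ^ a * (n : ℝ) ^ (2 * ε) * ‖x‖ := by
  calc ‖coc A n m x‖ ≤ N m (coc A n m x) := hN.norm_le (hn.trans hnm) _
    _ ≤ M * ((m : ℝ) / n) ^ a * N n x := hG m n hn hnm x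
    _ ≤ M * ((m : ℝ) / n) ^ a * (C * (n : ℝ) ^ ε * ‖x‖) := by
        gcongr
        exact hN.le_mul_norm hn x
    _ = M * C * ((m : ℝ) / n) ^ a * (n : ℝ) ^ ε * ‖x‖ := by ring
    _ ≤ M * C * ((m : ℝ) / n) ^ a * (n : ℝ) ^ (2 * ε) * ‖x‖ := by
        gcongr M * C * _ * ?_ * _
        exact natCast_rpow_le_two_mul hn hε

end FromAdaptedNorms

lemma snupd_of_adaptedNorms {A : ℕ → X →L[ℝ] X} {N : ℕ → X → ℝ} {C ε M a : ℝ}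
    (hC : 0 < C) (hε : 0 ≤ ε) (hM : 0 < M) (ha : 0 < a) (hN : AdaptedNorms N C ε)
    (hP : PolyDich A N) (hG : Grow A N M a) : SNUPD A := by
  obtain ⟨P, D, lam, hD, hlam, hPD⟩ := hP
  exact ⟨P, D * C * (1 + D * C), lam, 2 * ε, M * C, a, by positivity, hlam, by positivity,
    by positivity, ha, ⟨hPD.1, hPD.2.1, hPD.2.2.1,
      fun m n hn hnm x => hPD.norm_coc_proj_le hN hD.le hC.le hε hn hnm x,
      fun m n hm hmn u x hu hcu => hPD.norm_le_of_coc_eq hN hD.le hC.le hε hm hmn hu hcu⟩,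
    fun m n hn hnm x => hG.norm_coc_le hN hM.le hC.le hε hn hnm x⟩

theorem stmt18_general (A : ℕ → X →L[ℝ] X) :
    SNUPD A ↔
      ∃ (N : ℕ → X → ℝ) (C ε M a : ℝ), 0 < C ∧ 0 ≤ ε ∧ 0 < M ∧ 0 < a ∧
        AdaptedNorms N C ε ∧ PolyDich A N ∧ Grow A N M a :=
  ⟨exists_adaptedNorms_of_snupd, fun ⟨_, _, _, _, _, hC, hε, hM, ha, hN, hP, hG⟩ =>
    snupd_of_adaptedNorms hC hε hM ha hN hP hG⟩

/-- `(A_m)` admits a strong nonuniform polynomial dichotomy if and only if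
it admits a polynomial dichotomy with respect to some sequence of norms `‖·‖_m` satisfying
both `‖x‖ ≤ ‖x‖_m ≤ C m^ε ‖x‖` (for some `C > 0`, `ε ≥ 0`) and the uniform polynomial
growth bound `‖𝓐(m,n)x‖_m ≤ M(m/n)^a‖x‖_n` for `m ≥ n` (for some `M, a > 0`). -/
theorem stmt18 [CompleteSpace X] (A : ℕ → X →L[ℝ] X) :
    SNUPD A ↔
      ∃ (N : ℕ → X → ℝ) (C ε M a : ℝ), 0 < C ∧ 0 ≤ ε ∧ 0 < M ∧ 0 < a ∧
        AdaptedNorms N C ε ∧ PolyDich A N ∧ Grow A N M a :=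
  stmt18_general A
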